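/- Let n be a positive natural number, f : Fin n, m : Fin n → ℝ a mask vector, and e' = (Pi.single f 1) + m. Let x, x¹, x² : Fin n → ℝ with x¹ + x² = x, and s¹, s² : ℝ with s¹ + s² = 1. Let θ : ℝ, b : ℝ with b > 0, and a = 1/2 - b * θ. Define for j ∈ {1,2}: ⟨x_f⟩ʲ = (∑ i, e' i * xʲ i) - (∑ i, m i * xʲ i) and ⟨R⟩ʲ = a * sʲ + b * ⟨x_f⟩ʲ. Then ⟨R⟩¹ + ⟨R⟩² > 1/2 if and only if x f > θ. -/
import Mathlib


/-- OnePath end-to-end internal-node evaluation: the reconstructed result exceeds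
    `1/2` exactly when the true feature value exceeds the threshold `θ`. -/
theorem onepath_node_evaluation_correct (n : ℕ) (hn : 0 < n)
    (f : Fin n) (m : Fin n → ℝ) (e' : Fin n → ℝ) (he' : e' = Pi.single f 1 + m)
    (x x1 x2 : Fin n → ℝ) (hx : x1 + x2 = x)
    (s1 s2 : ℝ) (hs : s1 + s2 = 1)
    (θ b : ℝ) (hb : b > 0) (a : ℝ) (ha : a = 1/2 - b * θ) :
    (a * s1 + b * ((∑ i, e' i * x1 i) - (∑ i, m i * x1 i))) +
      (a * s2 + b * ((∑ i, e' i * x2 i) - (∑ i, m i * x2 i))) > 1/2 ↔ x f > θ := by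
  have h1 : ∀ y : Fin n → ℝ, (∑ i, e' i * y i) - (∑ i, m i * y i) = y f := by
    intro y
    subst he'
    simp only [Pi.add_apply, add_mul, Finset.sum_add_distrib]
    have : ∑ i, (Pi.single f 1 : Fin n → ℝ) i * y i = y f := by
      rw [Finset.sum_eq_single f]
      · simp
      · intro i _ hi; simp [Pi.single_apply, hi]
      · simp
    rw [this]; ring
  rw [h1 x1, h1 x2]
  have hxf : x1 f + x2 f = x f := by rw [← hx]; simp
  have key : a * s1 + b * x1 f + (a * s2 + b * x2 f) = 1/2 + b * (x f - θ) := by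
    subst ha; linear_combination (1/2 - b*θ) * hs + b * hxf
  rw [key]
  constructor
  · intro h; nlinarith
  · intro h; nlinarith
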